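/- Let (L, R) be an extremal party placement for a party axis ◁_𝒫 (L contains the |L| leftmost parties and R the |R| rightmost), and let ≻_v be a vote that is party-aligned single-peaked with axis ◁_𝒫. Suppose the candidates of the parties in L ∪ R do not form a suffix of ≻_v. Let a be v's least-favourite candidate among the candidates of parties outside L ∪ R, let b be v's most-favourite candidate among candidates of parties in L ∪ R, and let P_a, P_b be their parties. Then: if P_b ∈ R, then P_a directly follows the ◁_𝒫-last party of L; and if P_b ∈ L, then P_a directly precedes the ◁_𝒫-first party of R. -/

import Mathlib

/-- The vote `succ` is single-peaked with respect to the axis `lt`: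
for all `a ◁ b ◁ c`, if `a ≻ b` then `b ≻ c`. -/
def SinglePeakedWith {C : Type*} (succ lt : C → C → Prop) : Prop :=
  ∀ a b c : C, lt a b → lt b c → succ a b → succ b c

/-- Party-aligned single-peakedness of a single vote, where parties are indexed by
naturals and the party axis is the natural order of the indices: there is a
perceived candidate axis, compatible with the party axis, with respect to which
the vote is single-peaked. -/
def PASPVote {C : Type*} (party : C → ℕ) (succ : C → C → Prop) : Prop :=
  ∃ lt : C → C → Prop, IsStrictTotalOrder C lt ∧
    (∀ c c' : C, lt c c' → party c ≤ party c') ∧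
    SinglePeakedWith succ lt

/-!
Since the candidates of `L ∪ R` do not form a suffix of the vote, `b ≻ a`. Say `P_b ∈ R`. If some
party `q ∉ L`, `q ≠ P_a`, preceded `P_a`, then `q ∉ R` (as `R` is an up-set and `P_a ∉ R`), so
`q` has a candidate `c` outside `L ∪ R` with `c ≻ a`. On the candidate axis `c ◁ a ◁ b`, so
single-peakedness turns `c ≻ a` into `a ≻ b`, a contradiction. The case `P_b ∈ L` is the same
argument on the reversed axes, single-peakedness being invariant under reversal for a total vote.
-/

section

variable {C P : Type*}

def FormsSuffix (succ : C → C → Prop) (S : Set C) : Prop :=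
  ∀ c c' : C, c ∉ S → c' ∈ S → succ c c'

theorem rel_of_not_formsSuffix {succ : C → C → Prop} [Std.Trichotomous succ] [IsTrans C succ]
    {S : Set C} (hS : ¬ FormsSuffix succ S) {a b : C} (ha : ∀ c ∉ S, c ≠ a → succ c a)
    (hb : ∀ c ∈ S, c ≠ b → succ b c) : succ b a := by
  obtain ⟨c, c', hc, hc', hcc'⟩ : ∃ c c', c ∉ S ∧ c' ∈ S ∧ ¬ succ c c' := by
    simpa [FormsSuffix] using hS
  have hc'c : succ c' c := by
    rcases trichotomous_of succ c c' with h | rfl | h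
    · exact absurd h hcc'
    · exact absurd hc' hc
    · exact h
  have hbc : succ b c := by
    rcases eq_or_ne c' b with rfl | hne
    · exact hc'c
    · exact trans_of succ (hb c' hc' hne) hc'c
  rcases eq_or_ne c a with rfl | hne
  · exact hbc
  · exact trans_of succ hbc (ha c hc hne)

theorem SinglePeakedWith.swap {succ lt : C → C → Prop} [Std.Trichotomous succ] [Std.Asymm succ]
    [Std.Irrefl lt] (h : SinglePeakedWith succ lt) :
    SinglePeakedWith succ (Function.swap lt) := by
  intro a b c hba hcb hab
  rcases trichotomous_of succ b c with hbc | rfl | hcb'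
  · exact hbc
  · exact absurd hcb (irrefl b)
  · exact absurd (h c b a hcb hba hcb') (asymm hab)

theorem rel_of_rel_party (party : C → P) {r : C → C → Prop} {s : P → P → Prop}
    [Std.Trichotomous r] [Std.Asymm s]
    (hcompat : ∀ c c', party c ≠ party c' → r c c' → s (party c) (party c')) {x y : C}
    (h : s (party x) (party y)) : r x y := by
  rcases trichotomous_of r x y with hxy | rfl | hyx
  · exact hxy
  · exact absurd h (irrefl _)
  · exact absurd (hcompat y x (fun he => irrefl _ (he ▸ h)) hyx) (asymm h)

theorem party_lt_of_mem_upper (party : C → P) (hsurj : Function.Surjective party)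
    {ltP : P → P → Prop} [Std.Trichotomous ltP] [Std.Asymm ltP]
    {succ lt : C → C → Prop} [Std.Asymm succ] [Std.Trichotomous lt]
    (hcompat : ∀ c c', party c ≠ party c' → lt c c' → ltP (party c) (party c'))
    (hsp : SinglePeakedWith succ lt) {L R : Set P} (hRup : ∀ p ∈ R, ∀ q, ltP p q → q ∈ R)
    {a b : C} (haR : party a ∉ R) (hbR : party b ∈ R)
    (ha : ∀ c, party c ∉ L → party c ∉ R → c ≠ a → succ c a) (hba : succ b a) :
    ∀ q ∉ L, q ≠ party a → ltP (party a) q := by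
  have hab : lt a b := rel_of_rel_party party hcompat <| by
    rcases trichotomous_of ltP (party a) (party b) with h | h | h
    · exact h
    · exact absurd (h ▸ hbR) haR
    · exact absurd (hRup _ hbR _ h) haR
  intro q hqL hqa
  rcases trichotomous_of ltP (party a) q with h | rfl | hqa'
  · exact h
  · exact absurd rfl hqa
  · have hqR : q ∉ R := fun hqR => haR (hRup q hqR _ hqa')
    obtain ⟨c, rfl⟩ := hsurj q
    have hca : succ c a := ha c hqL hqR fun h => hqa (congrArg party h)
    exact absurd (hsp c a b (rel_of_rel_party party hcompat hqa') hab hca) (asymm hba)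

end

theorem extremal_placement_restriction_general
    {C P : Type*} (party : C → P) (hsurj : Function.Surjective party)
    (ltP : P → P → Prop) (hltP : IsStrictTotalOrder P ltP)
    (succ : C → C → Prop) (hsto : IsStrictTotalOrder C succ)
    (hPASP : ∃ lt : C → C → Prop, IsStrictTotalOrder C lt ∧
      (∀ c c' : C, party c ≠ party c' → lt c c' → ltP (party c) (party c')) ∧
      SinglePeakedWith succ lt)
    (L R : Set P)
    (hLdown : ∀ p ∈ L, ∀ q : P, ltP q p → q ∈ L)
    (hRup : ∀ p ∈ R, ∀ q : P, ltP p q → q ∈ R)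
    (hnsuffix : ¬ ∀ c c' : C, party c ∉ L ∪ R → party c' ∈ L ∪ R → succ c c')
    (a b : C) (haP : party a ∉ L ∪ R)
    (ha : ∀ c : C, party c ∉ L ∪ R → c ≠ a → succ c a)
    (hb : ∀ c : C, party c ∈ L ∪ R → c ≠ b → succ b c) :
    (party b ∈ R → ∀ q : P, q ∉ L → q ≠ party a → ltP (party a) q) ∧
    (party b ∈ L → ∀ q : P, q ∉ R → q ≠ party a → ltP q (party a)) := by
  obtain ⟨lt, hlt, hcompat, hsp⟩ := hPASP
  have hba : succ b a := rel_of_not_formsSuffix hnsuffix ha hb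
  have hout : ∀ c, party c ∉ L → party c ∉ R → c ≠ a → succ c a :=
    fun c hL hR => ha c fun h => h.elim hL hR
  refine ⟨fun hbR => ?_, fun hbL => ?_⟩
  · exact party_lt_of_mem_upper party hsurj hcompat hsp hRup (fun h => haP (.inr h)) hbR hout hba
  · exact party_lt_of_mem_upper (ltP := Function.swap ltP) (lt := Function.swap lt) party hsurj
      (fun c c' hne h => hcompat c' c hne.symm h) hsp.swap hLdown (fun h => haP (.inl h)) hbL
      (fun c hR hL => hout c hL hR) hba

/-- Lemma (vote-imposed restrictions): let `(L, R)` be an extremal party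
placement for the party axis `ltP` (`L` downward closed, `R` upward closed,
disjoint), and let `≻_v` be party-aligned single-peaked with axis `ltP`.
Suppose the candidates of the parties in `L ∪ R` do not form a suffix of the
vote. If `a` is the least-favourite candidate among parties outside `L ∪ R` and
`b` the most-favourite candidate among parties in `L ∪ R`, then: if `P_b ∈ R`
then `P_a` directly follows the last party of `L` (it is the `ltP`-minimum of
the parties outside `L`), and if `P_b ∈ L` then `P_a` directly precedes the
first party of `R` (it is the `ltP`-maximum of the parties outside `R`). -/
theorem extremal_placement_restriction
    {C P : Type*} (party : C → P) (hsurj : Function.Surjective party)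
    (ltP : P → P → Prop) (hltP : IsStrictTotalOrder P ltP)
    (succ : C → C → Prop) (hsto : IsStrictTotalOrder C succ)
    (hPASP : ∃ lt : C → C → Prop, IsStrictTotalOrder C lt ∧
      (∀ c c' : C, party c ≠ party c' → lt c c' → ltP (party c) (party c')) ∧
      SinglePeakedWith succ lt)
    (L R : Set P) (hdisj : Disjoint L R)
    (hLdown : ∀ p ∈ L, ∀ q : P, ltP q p → q ∈ L)
    (hRup : ∀ p ∈ R, ∀ q : P, ltP p q → q ∈ R)
    (hnsuffix : ¬ ∀ c c' : C, party c ∉ L ∪ R → party c' ∈ L ∪ R → succ c c')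
    (a b : C) (haP : party a ∉ L ∪ R) (hbP : party b ∈ L ∪ R)
    (ha : ∀ c : C, party c ∉ L ∪ R → c ≠ a → succ c a)
    (hb : ∀ c : C, party c ∈ L ∪ R → c ≠ b → succ b c) :
    (party b ∈ R → ∀ q : P, q ∉ L → q ≠ party a → ltP (party a) q) ∧
    (party b ∈ L → ∀ q : P, q ∉ R → q ≠ party a → ltP q (party a)) :=
  extremal_placement_restriction_general party hsurj ltP hltP succ hsto hPASP L R hLdown hRup
    hnsuffix a b haP ha hb
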